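/- Let β ∈ ℝ. Define operators on MvPolynomial (Fin 2) ℝ: h' p = (1/2)·(x·∂x p − ∂x² p + y·∂y p − ∂y² p + p) − β·∂x∂y p, and A⁻ p = −β·∂x∂y p. Then the commutator satisfies h' ∘ A⁻ − A⁻ ∘ h' = −A⁻ (equation (60): [h', A⁻] = −A⁻, so A⁻ is a lowering operator for the Cartan generator h'). -/
import Mathlib


open MvPolynomial

/-- The Cartan generator `h' p = (1/2)·(x·∂x p − ∂x² p + y·∂y p − ∂y² p + p) − β·∂x∂y p`. -/
noncomputable def cartanH' (β : ℝ) (p : MvPolynomial (Fin 2) ℝ) : MvPolynomial (Fin 2) ℝ :=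
  C (1 / 2 : ℝ) * (X 0 * pderiv 0 p - pderiv 0 (pderiv 0 p) +
      X 1 * pderiv 1 p - pderiv 1 (pderiv 1 p) + p) -
    C β * pderiv 0 (pderiv 1 p)

/-- The lowering operator `A⁻ p = −β·∂x∂y p`. -/
noncomputable def lowerA (β : ℝ) (p : MvPolynomial (Fin 2) ℝ) : MvPolynomial (Fin 2) ℝ :=
  - (C β * pderiv 0 (pderiv 1 p))

/-- Partial derivatives commute. -/
lemma pderiv_comm' (i j : Fin 2) (q : MvPolynomial (Fin 2) ℝ) :
    pderiv i (pderiv j q) = pderiv j (pderiv i q) := by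
  induction q using MvPolynomial.induction_on with
  | C a => simp
  | add p q hp hq => simp [hp, hq]
  | mul_X p k hp =>
    simp only [pderiv_mul, pderiv_X, map_add, hp, Pi.single_apply,
      apply_ite (⇑(pderiv i)), apply_ite (⇑(pderiv j)), pderiv_one, map_zero, ite_self,
      mul_zero, add_zero]
    ring

/-- Equation (60): `[h', A⁻] = −A⁻`, so `A⁻` is a lowering operator for `h'`. -/
theorem lowering_commutator (β : ℝ) :
    ∀ p : MvPolynomial (Fin 2) ℝ,
      cartanH' β (lowerA β p) - lowerA β (cartanH' β p) = - lowerA β p := by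
  intro p
  have h2 : (C ((2:ℝ)⁻¹) : MvPolynomial (Fin 2) ℝ) * 2 = 1 := by
    rw [show (2:MvPolynomial (Fin 2) ℝ) = C 2 from (map_ofNat C 2).symm, ← C_mul]; norm_num
  have h01 := pderiv_comm' 0 1
  simp only [cartanH', lowerA, map_neg, map_mul, map_add, map_sub, Derivation.leibniz,
    pderiv_X, pderiv_C, smul_eq_mul, h01]
  simp [Pi.single_apply]
  linear_combination (C β * pderiv 1 (pderiv 0 p)) * h2
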